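/- Let T be a finite lattice, X a chain in T with ⊥ ∈ X, B a chain with ⊥, ⊤ ∈ B, and φ : X → T a map satisfying φ(x) ≥ x for all x and φ(y) = φ(x) whenever x ≤ y ≤ φ(x) with x, y ∈ X. Then the following are equivalent: (1) for every x ∈ X, [x, φ(x)] ∩ B = {φ(x)}; (2) (⋃_{x ∈ X} [x, φ(x)]) ∩ B = φ(X). Moreover, condition (1) holds if and only if α_B(x) = φ(x) for all x ∈ X, where α_B(t) = min { b ∈ B | b ≥ t }. -/

import Mathlib

/-!
Any point of `B` in `[x, φ x]` that lies in `φ(X)` is some `φ y`, and comparing `x` with `y` in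
the chain `X` the hypothesis on `φ` gives `φ y = φ x`. A chain `B` containing `⊤` is closed under
finite meets, so `α_B x` is the least element of `B` above `x`, and `[x, y] ∩ B = {y}` says exactly
that `y` is that element.
-/

attribute [local instance] Classical.propDecidable

/-- `alphaB B t = min { b ∈ B | b ≥ t }`. -/
noncomputable def alphaB {T : Type*} [Lattice T] [Fintype T] [BoundedOrder T]
    (B : Finset T) (t : T) : T :=
  (B.filter fun b => t ≤ b).inf id

theorem IsChain.infClosed {α : Type*} [SemilatticeInf α] {s : Set α}
    (hs : IsChain (· ≤ ·) s) : InfClosed s := by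
  intro a ha b hb
  rcases hs.total ha hb with hab | hba
  · rwa [inf_eq_left.2 hab]
  · rwa [inf_eq_right.2 hba]

section Intervals

variable {T : Type*} [Preorder T] {X : Set T} {φ : T → T}

theorem eq_of_mem_Icc_of_isChain (hX : IsChain (· ≤ ·) X) (hge : ∀ x ∈ X, x ≤ φ x)
    (hc : ∀ x ∈ X, ∀ y ∈ X, x ≤ y → y ≤ φ x → φ y = φ x) {x y : T} (hx : x ∈ X) (hy : y ∈ X)
    (hxy : φ y ∈ Set.Icc x (φ x)) : φ y = φ x := by
  rcases hX.total hx hy with hle | hle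
  · exact hc x hx y hy hle ((hge y hy).trans hxy.2)
  · exact (hc y hy x hx hle hxy.1).symm

theorem forall_Icc_inter_eq_singleton_iff (hX : IsChain (· ≤ ·) X) (hge : ∀ x ∈ X, x ≤ φ x)
    (hc : ∀ x ∈ X, ∀ y ∈ X, x ≤ y → y ≤ φ x → φ y = φ x) (B : Set T) :
    (∀ x ∈ X, Set.Icc x (φ x) ∩ B = {φ x}) ↔ (⋃ x ∈ X, Set.Icc x (φ x)) ∩ B = φ '' X := by
  constructor
  · intro h
    rw [Set.iUnion₂_inter, Set.image_eq_iUnion]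
    exact Set.iUnion₂_congr h
  · intro h x hx
    have hφx : φ x ∈ (⋃ x ∈ X, Set.Icc x (φ x)) ∩ B := h ▸ Set.mem_image_of_mem φ hx
    refine Set.eq_singleton_iff_unique_mem.2 ⟨⟨⟨hge x hx, le_rfl⟩, hφx.2⟩, fun b hb => ?_⟩
    obtain ⟨y, hy, rfl⟩ : b ∈ φ '' X := h ▸ ⟨Set.mem_biUnion hx hb.1, hb.2⟩
    exact eq_of_mem_Icc_of_isChain hX hge hc hx hy hb.1

end Intervals

section AlphaB

variable {T : Type*} [Lattice T] [Fintype T] [BoundedOrder T] {B : Finset T}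

theorem alphaB_mem (hB : IsChain (· ≤ ·) (B : Set T)) (htop : ⊤ ∈ B) (t : T) :
    alphaB B t ∈ B :=
  Finset.mem_of_mem_filter _ <| (hB.mono (Finset.coe_subset.2 (Finset.filter_subset _ _))).infClosed.finsetInf_mem
    ⟨⊤, Finset.mem_filter.2 ⟨htop, le_top⟩⟩ fun _ hb => hb

theorem le_alphaB (B : Finset T) (t : T) : t ≤ alphaB B t :=
  Finset.le_inf fun _ hb => (Finset.mem_filter.1 hb).2

theorem alphaB_le {t b : T} (hb : b ∈ B) (htb : t ≤ b) : alphaB B t ≤ b :=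
  Finset.inf_le (Finset.mem_filter.2 ⟨hb, htb⟩)

theorem Icc_inter_eq_singleton_iff_alphaB_eq (hB : IsChain (· ≤ ·) (B : Set T)) (htop : ⊤ ∈ B)
    {x y : T} (hxy : x ≤ y) : Set.Icc x y ∩ (B : Set T) = {y} ↔ alphaB B x = y := by
  constructor
  · intro h
    have hyB : y ∈ B := (h.symm ▸ Set.mem_singleton y : y ∈ Set.Icc x y ∩ (B : Set T)).2
    have hα : alphaB B x ∈ Set.Icc x y ∩ (B : Set T) :=
      ⟨⟨le_alphaB B x, alphaB_le hyB hxy⟩, alphaB_mem hB htop x⟩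
    rw [h] at hα
    exact hα
  · rintro rfl
    refine Set.eq_singleton_iff_unique_mem.2 ⟨⟨⟨le_alphaB B x, le_rfl⟩, alphaB_mem hB htop x⟩, ?_⟩
    exact fun b hb => le_antisymm hb.1.2 (alphaB_le hb.2 hb.1.1)

end AlphaB

theorem interval_intersection_conditions_general
    {T : Type*} [Lattice T] [Fintype T] [BoundedOrder T]
    (X : Finset T) (hX : IsChain (· ≤ ·) (X : Set T))
    (B : Finset T) (hB : IsChain (· ≤ ·) (B : Set T)) (htop : ⊤ ∈ B)
    (φ : T → T)
    (hge : ∀ x ∈ X, x ≤ φ x)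
    (hc : ∀ x ∈ X, ∀ y ∈ X, x ≤ y → y ≤ φ x → φ y = φ x) :
    ((∀ x ∈ X, Set.Icc x (φ x) ∩ (B : Set T) = {φ x}) ↔
        (⋃ x ∈ X, Set.Icc x (φ x)) ∩ (B : Set T) = φ '' (X : Set T))
      ∧ ((∀ x ∈ X, Set.Icc x (φ x) ∩ (B : Set T) = {φ x}) ↔
        ∀ x ∈ X, alphaB B x = φ x) :=
  ⟨forall_Icc_inter_eq_singleton_iff hX hge hc B,
    forall₂_congr fun x hx => Icc_inter_eq_singleton_iff_alphaB_eq hB htop (hge x hx)⟩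

/-- Let `X` be a chain with `⊥ ∈ X` and `B` a chain with `⊥, ⊤ ∈ B` in a finite
lattice `T`, and let `φ` satisfy `φ x ≥ x` and `φ y = φ x` whenever `x ≤ y ≤ φ x`
(for `x, y ∈ X`). Then `[x, φ x] ∩ B = {φ x}` for all `x ∈ X` iff
`(⋃_{x ∈ X} [x, φ x]) ∩ B = φ(X)`, and the first condition holds iff
`α_B x = φ x` for all `x ∈ X`. -/
theorem interval_intersection_conditions
    {T : Type*} [Lattice T] [Fintype T] [BoundedOrder T]
    (X : Finset T) (hX : IsChain (· ≤ ·) (X : Set T)) (hXbot : ⊥ ∈ X)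
    (B : Finset T) (hB : IsChain (· ≤ ·) (B : Set T)) (hbot : ⊥ ∈ B) (htop : ⊤ ∈ B)
    (φ : T → T)
    (hge : ∀ x ∈ X, x ≤ φ x)
    (hc : ∀ x ∈ X, ∀ y ∈ X, x ≤ y → y ≤ φ x → φ y = φ x) :
    ((∀ x ∈ X, Set.Icc x (φ x) ∩ (B : Set T) = {φ x}) ↔
        (⋃ x ∈ X, Set.Icc x (φ x)) ∩ (B : Set T) = φ '' (X : Set T))
      ∧ ((∀ x ∈ X, Set.Icc x (φ x) ∩ (B : Set T) = {φ x}) ↔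
        ∀ x ∈ X, alphaB B x = φ x) :=
  interval_intersection_conditions_general X hX B hB htop φ hge hc
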